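/- Let L0 be shared between frames F1, F2, assume every lcut0-run of F2 is an lcut0-run of F1, let lsrc ⊆ LEFT0, lobs ⊆ RIGHT2, and let B_o be an lobs-run of F2. Then J^2_{lobs→lsrc}(B_o) = ⋃_{B_c ∈ J^2_{lobs→lcut0}(B_o)} J^1_{lcut0→lsrc}(B_c). -/
import Mathlib


open scoped Classical

/-- A (static) frame over ambient types of locations, channels and data:
a set `LO` of locations, a set `CH` of channels, sender and recipient
endpoints for channels, and for each location a prefix-closed set of
finite-or-infinite sequences of labels `(c, v)` (represented as functions
`ℕ → Option (Chan × D)` with initial-segment domain). -/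
structure Frame (Loc Chan D : Type) where
  LO : Set Loc
  CH : Set Chan
  sender : Chan → Loc
  recipt : Chan → Loc
  sender_mem : ∀ c ∈ CH, sender c ∈ LO
  recipt_mem : ∀ c ∈ CH, recipt c ∈ LO
  traces : Loc → Set (ℕ → Option (Chan × D))
  traces_dom : ∀ ℓ, ∀ t ∈ traces ℓ, ∀ m n : ℕ, m ≤ n → t n ≠ none → t m ≠ none
  traces_labels : ∀ ℓ, ∀ t ∈ traces ℓ, ∀ n c v, t n = some (c, v) →
    c ∈ CH ∧ (sender c = ℓ ∨ recipt c = ℓ)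
  traces_prefix : ∀ ℓ, ∀ t ∈ traces ℓ, ∀ n : ℕ,
    (fun m => if m < n then t m else none) ∈ traces ℓ

/-- Raw data of a system of events: a carrier set of events with a relation. -/
structure EvStruct (E : Type) where
  carrier : Set E
  rel : E → E → Prop

variable {Loc Chan D E : Type}

/-- `B` is a system of events: `rel` is a partial order on `carrier`, and every
event has only finitely many predecessors. -/
def IsSysEv (B : EvStruct E) : Prop :=
  (∀ a b, B.rel a b → a ∈ B.carrier ∧ b ∈ B.carrier) ∧
  (∀ a ∈ B.carrier, B.rel a a) ∧
  (∀ a b, B.rel a b → B.rel b a → a = b) ∧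
  (∀ a b c, B.rel a b → B.rel b c → B.rel a c) ∧
  (∀ a ∈ B.carrier, {x | B.rel x a}.Finite)

/-- The events of `B` whose channel has `ℓ` as sender or recipient. -/
def evProj (F : Frame Loc Chan D) (chan : E → Chan) (B : EvStruct E) (ℓ : Loc) :
    Set E :=
  {e | e ∈ B.carrier ∧ (F.sender (chan e) = ℓ ∨ F.recipt (chan e) = ℓ)}

/-- The projection of `B` to location `ℓ`, viewed as a sequence of labels: the
`n`-th entry is the label of the event of `evProj F chan B ℓ` having exactly
`n` strict predecessors there. -/
noncomputable def projSeq (F : Frame Loc Chan D) (chan : E → Chan) (msg : E → D)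
    (B : EvStruct E) (ℓ : Loc) : ℕ → Option (Chan × D) := fun n =>
  if h : ∃ e, e ∈ evProj F chan B ℓ ∧
      Set.ncard {e' | e' ∈ evProj F chan B ℓ ∧ B.rel e' e ∧ e' ≠ e} = n
  then some (chan h.choose, msg h.choose)
  else none

/-- `B` is an execution of `F`: a system of events on the channels of `F`
whose projection to each location of `F` is linearly ordered and, viewed as
a sequence, a trace of that location. -/
def IsExec (F : Frame Loc Chan D) (chan : E → Chan) (msg : E → D)
    (B : EvStruct E) : Prop :=
  IsSysEv B ∧ (∀ e ∈ B.carrier, chan e ∈ F.CH) ∧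
  ∀ ℓ ∈ F.LO,
    (∀ a ∈ evProj F chan B ℓ, ∀ b ∈ evProj F chan B ℓ, B.rel a b ∨ B.rel b a) ∧
    projSeq F chan msg B ℓ ∈ F.traces ℓ

/-- Restriction `B|C` of `B` to the events whose channel lies in `C`. -/
def evRestrict (chan : E → Chan) (B : EvStruct E) (C : Set Chan) : EvStruct E where
  carrier := {e | e ∈ B.carrier ∧ chan e ∈ C}
  rel := fun a b => B.rel a b ∧ chan a ∈ C ∧ chan b ∈ C

/-- `lruns C`: the `C`-runs of `F`, i.e. restrictions to `C` of executions. -/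
def lruns (F : Frame Loc Chan D) (chan : E → Chan) (msg : E → D) (C : Set Chan) :
    Set (EvStruct E) :=
  {B | ∃ A : EvStruct E, IsExec F chan msg A ∧ evRestrict chan A C = B}

/-- `J_{C→C'}(B)`: the `C'`-runs compatible with `B`, computed in `F`. -/
def cmpt (F : Frame Loc Chan D) (chan : E → Chan) (msg : E → D)
    (C C' : Set Chan) (B : EvStruct E) : Set (EvStruct E) :=
  {B' | ∃ A : EvStruct E, IsExec F chan msg A ∧
      evRestrict chan A C = B ∧ evRestrict chan A C' = B'}

/-- `L0` is shared between `F1` and `F2`: `L0` lies in the locations of both,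
and every `ℓ ∈ L0` has the same channel endpoints and trace set in both. -/
def Shared (F1 F2 : Frame Loc Chan D) (L0 : Set Loc) : Prop :=
  L0 ⊆ F1.LO ∧ L0 ⊆ F2.LO ∧
  ∀ ℓ ∈ L0,
    ({c | c ∈ F1.CH ∧ F1.sender c = ℓ} = {c | c ∈ F2.CH ∧ F2.sender c = ℓ}) ∧
    ({c | c ∈ F1.CH ∧ F1.recipt c = ℓ} = {c | c ∈ F2.CH ∧ F2.recipt c = ℓ}) ∧
    F1.traces ℓ = F2.traces ℓ

/-- The channels of `F` with both endpoints in `L0`. -/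
def LEFT0 (F : Frame Loc Chan D) (L0 : Set Loc) : Set Chan :=
  {c | c ∈ F.CH ∧ F.sender c ∈ L0 ∧ F.recipt c ∈ L0}

/-- The channels of `F` with exactly one endpoint in `L0`. -/
def lcut0 (F : Frame Loc Chan D) (L0 : Set Loc) : Set Chan :=
  {c | c ∈ F.CH ∧ Xor' (F.sender c ∈ L0) (F.recipt c ∈ L0)}

/-- The channels of `F` with no endpoint in `L0`. -/
def RIGHTchans (F : Frame Loc Chan D) (L0 : Set Loc) : Set Chan :=
  {c | c ∈ F.CH ∧ F.sender c ∉ L0 ∧ F.recipt c ∉ L0}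


section Aux

variable {Loc Chan D E : Type}

lemma EvStruct.ext' {B C : EvStruct E} (h1 : B.carrier = C.carrier)
    (h2 : B.rel = C.rel) : B = C := by
  cases B; cases C; simp_all

lemma shared_symm {F1 F2 : Frame Loc Chan D} {L0 : Set Loc}
    (h : Shared F1 F2 L0) : Shared F2 F1 L0 :=
  ⟨h.2.1, h.1, fun ℓ hℓ =>
    ⟨((h.2.2 ℓ hℓ).1).symm, ((h.2.2 ℓ hℓ).2.1).symm, ((h.2.2 ℓ hℓ).2.2).symm⟩⟩

lemma shared_sender {F1 F2 : Frame Loc Chan D} {L0 : Set Loc}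
    (h : Shared F1 F2 L0) {ℓ : Loc} (hℓ : ℓ ∈ L0) (c : Chan) :
    (c ∈ F1.CH ∧ F1.sender c = ℓ) ↔ (c ∈ F2.CH ∧ F2.sender c = ℓ) :=
  Set.ext_iff.mp (h.2.2 ℓ hℓ).1 c

lemma shared_recipt {F1 F2 : Frame Loc Chan D} {L0 : Set Loc}
    (h : Shared F1 F2 L0) {ℓ : Loc} (hℓ : ℓ ∈ L0) (c : Chan) :
    (c ∈ F1.CH ∧ F1.recipt c = ℓ) ↔ (c ∈ F2.CH ∧ F2.recipt c = ℓ) :=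
  Set.ext_iff.mp (h.2.2 ℓ hℓ).2.1 c

lemma mem_touch_iff {F : Frame Loc Chan D} {L0 : Set Loc} {c : Chan} :
    c ∈ LEFT0 F L0 ∪ lcut0 F L0 ↔
      c ∈ F.CH ∧ (F.sender c ∈ L0 ∨ F.recipt c ∈ L0) := by
  constructor
  · intro hc
    rcases hc with h | h
    · exact ⟨h.1, Or.inl h.2.1⟩
    · obtain ⟨h1, h2⟩ := h
      have h2' : (F.sender c ∈ L0 ∧ F.recipt c ∉ L0) ∨
          (F.recipt c ∈ L0 ∧ F.sender c ∉ L0) := h2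
      rcases h2' with ⟨hs, _⟩ | ⟨hr, _⟩
      exacts [⟨h1, Or.inl hs⟩, ⟨h1, Or.inr hr⟩]
  · rintro ⟨h1, h2⟩
    by_cases hs : F.sender c ∈ L0 <;> by_cases hr : F.recipt c ∈ L0
    · exact Or.inl ⟨h1, hs, hr⟩
    · exact Or.inr ⟨h1, Or.inl ⟨hs, hr⟩⟩
    · exact Or.inr ⟨h1, Or.inr ⟨hr, hs⟩⟩
    · rcases h2 with h | h
      exacts [absurd h hs, absurd h hr]

lemma lcut0_not_left {F : Frame Loc Chan D} {L0 : Set Loc} {c : Chan}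
    (h : c ∈ lcut0 F L0) : c ∉ LEFT0 F L0 := by
  obtain ⟨h1, h2⟩ := h
  have h2' : (F.sender c ∈ L0 ∧ F.recipt c ∉ L0) ∨
      (F.recipt c ∈ L0 ∧ F.sender c ∉ L0) := h2
  rintro ⟨_, hs, hr⟩
  rcases h2' with ⟨_, h⟩ | ⟨_, h⟩
  exacts [h hr, h hs]

lemma shared_CH_of_touch {F1 F2 : Frame Loc Chan D} {L0 : Set Loc}
    (hsh : Shared F1 F2 L0) {c : Chan} (hc : c ∈ LEFT0 F1 L0 ∪ lcut0 F1 L0) :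
    c ∈ F2.CH := by
  obtain ⟨h1, h2⟩ := mem_touch_iff.mp hc
  rcases h2 with h | h
  · exact ((shared_sender hsh h c).mp ⟨h1, rfl⟩).1
  · exact ((shared_recipt hsh h c).mp ⟨h1, rfl⟩).1

lemma LEFT0_eq_of_shared {F1 F2 : Frame Loc Chan D} {L0 : Set Loc}
    (hsh : Shared F1 F2 L0) : LEFT0 F1 L0 = LEFT0 F2 L0 := by
  have key : ∀ (G1 G2 : Frame Loc Chan D), Shared G1 G2 L0 →
      LEFT0 G1 L0 ⊆ LEFT0 G2 L0 := by
    rintro G1 G2 hsh c ⟨h1, hs, hr⟩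
    obtain ⟨h2, hs2⟩ := (shared_sender hsh hs c).mp ⟨h1, rfl⟩
    obtain ⟨_, hr2⟩ := (shared_recipt hsh hr c).mp ⟨h1, rfl⟩
    exact ⟨h2, hs2 ▸ hs, hr2 ▸ hr⟩
  exact Set.Subset.antisymm (key F1 F2 hsh) (key F2 F1 (shared_symm hsh))

lemma lcut0_eq_of_shared {F1 F2 : Frame Loc Chan D} {L0 : Set Loc}
    (hsh : Shared F1 F2 L0) : lcut0 F1 L0 = lcut0 F2 L0 := by
  have key : ∀ (G1 G2 : Frame Loc Chan D), Shared G1 G2 L0 →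
      lcut0 G1 L0 ⊆ lcut0 G2 L0 := by
    rintro G1 G2 hsh c ⟨h1, h2⟩
    have h2' : (G1.sender c ∈ L0 ∧ G1.recipt c ∉ L0) ∨
        (G1.recipt c ∈ L0 ∧ G1.sender c ∉ L0) := h2
    rcases h2' with ⟨hs, hnr⟩ | ⟨hr, hns⟩
    · obtain ⟨h3, hs2⟩ := (shared_sender hsh hs c).mp ⟨h1, rfl⟩
      have hnr2 : G2.recipt c ∉ L0 := by
        intro hmem
        exact hnr (((shared_recipt hsh hmem c).mpr ⟨h3, rfl⟩).2 ▸ hmem)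
      exact ⟨h3, Or.inl ⟨hs2 ▸ hs, hnr2⟩⟩
    · obtain ⟨h3, hr2⟩ := (shared_recipt hsh hr c).mp ⟨h1, rfl⟩
      have hns2 : G2.sender c ∉ L0 := by
        intro hmem
        exact hns (((shared_sender hsh hmem c).mpr ⟨h3, rfl⟩).2 ▸ hmem)
      exact ⟨h3, Or.inr ⟨hr2 ▸ hr, hns2⟩⟩
  exact Set.Subset.antisymm (key F1 F2 hsh) (key F2 F1 (shared_symm hsh))

end Aux


section Glue

variable {Loc Chan D E : Type}

/-- Left-part events: events of `Al` whose channel touches `L0`. -/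
def laP (Fl : Frame Loc Chan D) (L0 : Set Loc) (chan : E → Chan)
    (Al : EvStruct E) (e : E) : Prop :=
  e ∈ Al.carrier ∧ chan e ∈ LEFT0 Fl L0 ∪ lcut0 Fl L0

/-- Right-part events: events of `Ar` whose channel is not internal to `L0`. -/
def raP (Fl : Frame Loc Chan D) (L0 : Set Loc) (chan : E → Chan)
    (Ar : EvStruct E) (e : E) : Prop :=
  e ∈ Ar.carrier ∧ chan e ∉ LEFT0 Fl L0

/-- The glued system of events. -/
def glueSys (Fl : Frame Loc Chan D) (L0 : Set Loc) (chan : E → Chan)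
    (Al Ar : EvStruct E) : EvStruct E where
  carrier := {e | laP Fl L0 chan Al e ∨ raP Fl L0 chan Ar e}
  rel := fun a b =>
    (Al.rel a b ∧ laP Fl L0 chan Al a ∧ laP Fl L0 chan Al b) ∨
    (Ar.rel a b ∧ raP Fl L0 chan Ar a ∧ raP Fl L0 chan Ar b) ∨
    (laP Fl L0 chan Al a ∧ raP Fl L0 chan Ar b ∧
      ∃ m, chan m ∈ lcut0 Fl L0 ∧ Al.rel a m ∧ Ar.rel m b) ∨
    (raP Fl L0 chan Ar a ∧ laP Fl L0 chan Al b ∧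
      ∃ m, chan m ∈ lcut0 Fl L0 ∧ Ar.rel a m ∧ Al.rel m b)

variable {Fl Fr : Frame Loc Chan D} {chan : E → Chan} {msg : E → D} {L0 : Set Loc}
variable {Al Ar : EvStruct E}

lemma cut_mem (hcut : evRestrict chan Al (lcut0 Fl L0) = evRestrict chan Ar (lcut0 Fl L0))
    {e : E} (he : chan e ∈ lcut0 Fl L0) : e ∈ Al.carrier ↔ e ∈ Ar.carrier := by
  have h2 := Set.ext_iff.mp (congrArg EvStruct.carrier hcut) e
  simp only [evRestrict, Set.mem_setOf_eq] at h2
  constructor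
  · intro h; exact (h2.mp ⟨h, he⟩).1
  · intro h; exact (h2.mpr ⟨h, he⟩).1

lemma cut_rel (hcut : evRestrict chan Al (lcut0 Fl L0) = evRestrict chan Ar (lcut0 Fl L0))
    {a b : E} (ha : chan a ∈ lcut0 Fl L0) (hb : chan b ∈ lcut0 Fl L0) :
    Al.rel a b ↔ Ar.rel a b := by
  have h2 := congrFun (congrFun (congrArg EvStruct.rel hcut) a) b
  simp only [evRestrict] at h2
  constructor
  · intro h; exact (h2 ▸ (⟨h, ha, hb⟩ : Al.rel a b ∧ _ ∧ _)).1
  · intro h; exact (h2.symm ▸ (⟨h, ha, hb⟩ : Ar.rel a b ∧ _ ∧ _)).1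

lemma cut_of_lara {e : E} (hl : laP Fl L0 chan Al e) (hr : raP Fl L0 chan Ar e) :
    chan e ∈ lcut0 Fl L0 := by
  rcases hl.2 with h | h
  · exact absurd h hr.2
  · exact h

lemma la_of_cut (hcut : evRestrict chan Al (lcut0 Fl L0) = evRestrict chan Ar (lcut0 Fl L0))
    {e : E} (he : e ∈ Ar.carrier) (hc : chan e ∈ lcut0 Fl L0) : laP Fl L0 chan Al e :=
  ⟨(cut_mem hcut hc).mpr he, Or.inr hc⟩

lemma ra_of_cut (hcut : evRestrict chan Al (lcut0 Fl L0) = evRestrict chan Ar (lcut0 Fl L0))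
    {e : E} (he : e ∈ Al.carrier) (hc : chan e ∈ lcut0 Fl L0) : raP Fl L0 chan Ar e :=
  ⟨(cut_mem hcut hc).mp he, lcut0_not_left hc⟩

lemma glue_lemL (hcut : evRestrict chan Al (lcut0 Fl L0) = evRestrict chan Ar (lcut0 Fl L0))
    (hAl : IsExec Fl chan msg Al)
    {a b : E} (h : (glueSys Fl L0 chan Al Ar).rel a b)
    (ha : laP Fl L0 chan Al a) (hb : laP Fl L0 chan Al b) : Al.rel a b := by
  have htr := hAl.1.2.2.2.1
  rcases h with ⟨h, _, _⟩ | ⟨h, ha', hb'⟩ | ⟨_, hb', m, hm, h1, h2⟩ | ⟨ha', _, m, hm, h1, h2⟩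
  · exact h
  · exact (cut_rel hcut (cut_of_lara ha ha') (cut_of_lara hb hb')).mpr h
  · -- a ≤l m ≤r b with b a cut event
    have hbc := cut_of_lara hb hb'
    have := (cut_rel hcut hm hbc).mpr h2
    exact htr a m b h1 this
  · -- a ≤r m ≤l b with a a cut event
    have hac := cut_of_lara ha ha'
    have := (cut_rel hcut hac hm).mpr h1
    exact htr a m b this h2

lemma glue_lemR (hcut : evRestrict chan Al (lcut0 Fl L0) = evRestrict chan Ar (lcut0 Fl L0))
    (hAr : IsExec Fr chan msg Ar)
    {a b : E} (h : (glueSys Fl L0 chan Al Ar).rel a b)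
    (ha : raP Fl L0 chan Ar a) (hb : raP Fl L0 chan Ar b) : Ar.rel a b := by
  have htr := hAr.1.2.2.2.1
  rcases h with ⟨h, ha', hb'⟩ | ⟨h, _, _⟩ | ⟨ha', _, m, hm, h1, h2⟩ | ⟨_, hb', m, hm, h1, h2⟩
  · exact (cut_rel hcut (cut_of_lara ha' ha) (cut_of_lara hb' hb)).mp h
  · exact h
  · have hac := cut_of_lara ha' ha
    have := (cut_rel hcut hac hm).mp h1
    exact htr a m b this h2
  · have hbc := cut_of_lara hb' hb
    have := (cut_rel hcut hm hbc).mp h2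
    exact htr a m b h1 this


lemma glue_sysEv (hcut : evRestrict chan Al (lcut0 Fl L0) = evRestrict chan Ar (lcut0 Fl L0))
    (hAl : IsExec Fl chan msg Al) (hAr : IsExec Fr chan msg Ar) :
    IsSysEv (glueSys Fl L0 chan Al Ar) := by
  obtain ⟨⟨hvl, hrl, hal, htl, hfl⟩, hchl, hlocl⟩ := hAl
  obtain ⟨⟨hvr, hrr, har, htr, hfr⟩, hchr, hlocr⟩ := hAr
  have hAl' : IsExec Fl chan msg Al := ⟨⟨hvl, hrl, hal, htl, hfl⟩, hchl, hlocl⟩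
  have hAr' : IsExec Fr chan msg Ar := ⟨⟨hvr, hrr, har, htr, hfr⟩, hchr, hlocr⟩
  refine ⟨?_, ?_, ?_, ?_, ?_⟩
  · -- validity
    rintro a b (⟨_, ha, hb⟩ | ⟨_, ha, hb⟩ | ⟨ha, hb, _⟩ | ⟨ha, hb, _⟩)
    exacts [⟨Or.inl ha, Or.inl hb⟩, ⟨Or.inr ha, Or.inr hb⟩,
      ⟨Or.inl ha, Or.inr hb⟩, ⟨Or.inr ha, Or.inl hb⟩]
  · -- reflexivity
    rintro a (ha | ha)
    · exact Or.inl ⟨hrl a ha.1, ha, ha⟩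
    · exact Or.inr (Or.inl ⟨hrr a ha.1, ha, ha⟩)
  · -- antisymmetry
    intro a b h1 h2
    have finL : laP Fl L0 chan Al a → laP Fl L0 chan Al b → a = b := fun ha hb =>
      hal a b (glue_lemL hcut hAl' h1 ha hb) (glue_lemL hcut hAl' h2 hb ha)
    have finR : raP Fl L0 chan Ar a → raP Fl L0 chan Ar b → a = b := fun ha hb =>
      har a b (glue_lemR hcut hAr' h1 ha hb) (glue_lemR hcut hAr' h2 hb ha)
    rcases h1 with ⟨r1, la1, lb1⟩ | ⟨r1, ra1, rb1⟩ | ⟨la1, rb1, m1, hm1, p1, q1⟩ |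
        ⟨ra1, lb1, m1, hm1, p1, q1⟩
    · exact finL la1 lb1
    · exact finR ra1 rb1
    · -- X(a,b)
      rcases h2 with ⟨r2, lb2, la2⟩ | ⟨r2, rb2, ra2⟩ | ⟨lb2, ra2, m2, hm2, p2, q2⟩ |
          ⟨rb2, la2, m2, hm2, p2, q2⟩
      · exact finL la2 lb2
      · exact finR ra2 rb2
      · exact finL la1 lb2
      · -- hard case: X(a,b), Y(b,a)
        -- p1 : Al.rel a m1, q1 : Ar.rel m1 b, p2 : Ar.rel b m2, q2 : Al.rel m2 a
        have h3 : Ar.rel m1 m2 := htr m1 b m2 q1 p2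
        have h4 : Al.rel m1 m2 := (cut_rel hcut hm1 hm2).mpr h3
        have h5 : Al.rel a m2 := htl a m1 m2 p1 h4
        have h6 : a = m2 := hal a m2 h5 q2
        have ha : raP Fl L0 chan Ar a := ra_of_cut hcut la1.1 (h6 ▸ hm2)
        exact finR ha rb1
    · -- Y(a,b)
      rcases h2 with ⟨r2, lb2, la2⟩ | ⟨r2, rb2, ra2⟩ | ⟨lb2, ra2, m2, hm2, p2, q2⟩ |
          ⟨rb2, la2, m2, hm2, p2, q2⟩
      · exact finL la2 lb2
      · exact finR ra2 rb2
      · -- hard case: Y(a,b), X(b,a)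
        -- p1 : Ar.rel a m1, q1 : Al.rel m1 b, p2 : Al.rel b m2, q2 : Ar.rel m2 a
        have h3 : Ar.rel m2 m1 := htr m2 a m1 q2 p1
        have h4 : Al.rel m2 m1 := (cut_rel hcut hm2 hm1).mpr h3
        have h5 : Al.rel b m1 := htl b m2 m1 p2 h4
        have h6 : b = m1 := hal b m1 h5 q1
        have hb : raP Fl L0 chan Ar b := ra_of_cut hcut lb1.1 (h6 ▸ hm1)
        exact finR ra1 hb
      · exact finL la2 lb1
  · -- transitivity
    intro a b c h1 h2
    rcases h1 with ⟨r1, la1, lb1⟩ | ⟨r1, ra1, rb1⟩ | ⟨la1, rb1, m1, hm1, p1, q1⟩ |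
        ⟨ra1, lb1, m1, hm1, p1, q1⟩
    · rcases h2 with ⟨r2, lb2, lc2⟩ | ⟨r2, rb2, rc2⟩ | ⟨lb2, rc2, m2, hm2, p2, q2⟩ |
          ⟨rb2, lc2, m2, hm2, p2, q2⟩
      · exact Or.inl ⟨htl a b c r1 r2, la1, lc2⟩
      · exact Or.inr (Or.inr (Or.inl ⟨la1, rc2, b, cut_of_lara lb1 rb2, r1, r2⟩))
      · exact Or.inr (Or.inr (Or.inl ⟨la1, rc2, m2, hm2, htl a b m2 r1 p2, q2⟩))
      · have hbc := cut_of_lara lb1 rb2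
        have h3 : Al.rel b m2 := (cut_rel hcut hbc hm2).mpr p2
        exact Or.inl ⟨htl a b c r1 (htl b m2 c h3 q2), la1, lc2⟩
    · rcases h2 with ⟨r2, lb2, lc2⟩ | ⟨r2, rb2, rc2⟩ | ⟨lb2, rc2, m2, hm2, p2, q2⟩ |
          ⟨rb2, lc2, m2, hm2, p2, q2⟩
      · exact Or.inr (Or.inr (Or.inr ⟨ra1, lc2, b, cut_of_lara lb2 rb1, r1, r2⟩))
      · exact Or.inr (Or.inl ⟨htr a b c r1 r2, ra1, rc2⟩)
      · have hbc := cut_of_lara lb2 rb1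
        have h3 : Ar.rel b m2 := (cut_rel hcut hbc hm2).mp p2
        exact Or.inr (Or.inl ⟨htr a m2 c (htr a b m2 r1 h3) q2, ra1, rc2⟩)
      · exact Or.inr (Or.inr (Or.inr ⟨ra1, lc2, m2, hm2, htr a b m2 r1 p2, q2⟩))
    · -- X(a,b)
      rcases h2 with ⟨r2, lb2, lc2⟩ | ⟨r2, rb2, rc2⟩ | ⟨lb2, rc2, m2, hm2, p2, q2⟩ |
          ⟨rb2, lc2, m2, hm2, p2, q2⟩
      · have hbc := cut_of_lara lb2 rb1
        have h3 : Al.rel m1 b := (cut_rel hcut hm1 hbc).mpr q1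
        exact Or.inl ⟨htl a b c (htl a m1 b p1 h3) r2, la1, lc2⟩
      · exact Or.inr (Or.inr (Or.inl ⟨la1, rc2, m1, hm1, p1, htr m1 b c q1 r2⟩))
      · have hbc := cut_of_lara lb2 rb1
        have h3 : Al.rel m1 b := (cut_rel hcut hm1 hbc).mpr q1
        exact Or.inr (Or.inr (Or.inl ⟨la1, rc2, m2, hm2,
          htl a b m2 (htl a m1 b p1 h3) p2, q2⟩))
      · have h3 : Ar.rel m1 m2 := htr m1 b m2 q1 p2
        have h4 : Al.rel m1 m2 := (cut_rel hcut hm1 hm2).mpr h3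
        exact Or.inl ⟨htl a m2 c (htl a m1 m2 p1 h4) q2, la1, lc2⟩
    · -- Y(a,b)
      rcases h2 with ⟨r2, lb2, lc2⟩ | ⟨r2, rb2, rc2⟩ | ⟨lb2, rc2, m2, hm2, p2, q2⟩ |
          ⟨rb2, lc2, m2, hm2, p2, q2⟩
      · exact Or.inr (Or.inr (Or.inr ⟨ra1, lc2, m1, hm1, p1, htl m1 b c q1 r2⟩))
      · have hbc := cut_of_lara lb1 rb2
        have h3 : Ar.rel m1 b := (cut_rel hcut hm1 hbc).mp q1
        exact Or.inr (Or.inl ⟨htr a b c (htr a m1 b p1 h3) r2, ra1, rc2⟩)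
      · have h3 : Al.rel m1 m2 := htl m1 b m2 q1 p2
        have h4 : Ar.rel m1 m2 := (cut_rel hcut hm1 hm2).mp h3
        exact Or.inr (Or.inl ⟨htr a m2 c (htr a m1 m2 p1 h4) q2, ra1, rc2⟩)
      · have hbc := cut_of_lara lb1 rb2
        have h3 : Ar.rel m1 b := (cut_rel hcut hm1 hbc).mp q1
        exact Or.inr (Or.inr (Or.inr ⟨ra1, lc2, m2, hm2,
          htr a b m2 (htr a m1 b p1 h3) p2, q2⟩))
  · -- finiteness of predecessor sets
    rintro b (hlb | hrb)
    · have hsub : {x | (glueSys Fl L0 chan Al Ar).rel x b} ⊆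
          {x | Al.rel x b} ∪
            ⋃ m ∈ {m | Al.rel m b ∧ chan m ∈ lcut0 Fl L0}, {x | Ar.rel x m} := by
        rintro x (⟨r, _, _⟩ | ⟨r, rx, rb'⟩ | ⟨lx, rb', m, hm, p, q⟩ | ⟨rx, lb', m, hm, p, q⟩)
        · exact Or.inl r
        · have hbc := cut_of_lara hlb rb'
          exact Or.inr (Set.mem_biUnion ⟨hrl b hlb.1, hbc⟩ r)
        · have hbc := cut_of_lara hlb rb'
          exact Or.inl (htl x m b p ((cut_rel hcut hm hbc).mpr q))
        · exact Or.inr (Set.mem_biUnion ⟨q, hm⟩ p)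
      refine Set.Finite.subset (Set.Finite.union (hfl b hlb.1) ?_) hsub
      refine Set.Finite.biUnion ((hfl b hlb.1).subset fun m hm => hm.1) ?_
      rintro m ⟨hrel, hmc⟩
      exact hfr m ((cut_mem hcut hmc).mp (hvl m b hrel).1)
    · have hsub : {x | (glueSys Fl L0 chan Al Ar).rel x b} ⊆
          {x | Ar.rel x b} ∪
            ⋃ m ∈ {m | Ar.rel m b ∧ chan m ∈ lcut0 Fl L0}, {x | Al.rel x m} := by
        rintro x (⟨r, lx, lb'⟩ | ⟨r, _, _⟩ | ⟨lx, rb', m, hm, p, q⟩ | ⟨rx, lb', m, hm, p, q⟩)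
        · have hbc := cut_of_lara lb' hrb
          exact Or.inr (Set.mem_biUnion ⟨hrr b hrb.1, hbc⟩ r)
        · exact Or.inl r
        · exact Or.inr (Set.mem_biUnion ⟨q, hm⟩ p)
        · have hbc := cut_of_lara lb' hrb
          exact Or.inl (htr x m b p ((cut_rel hcut hm hbc).mp q))
      refine Set.Finite.subset (Set.Finite.union (hfr b hrb.1) ?_) hsub
      refine Set.Finite.biUnion ((hfr b hrb.1).subset fun m hm => hm.1) ?_
      rintro m ⟨hrel, hmc⟩
      exact hfl m ((cut_mem hcut hmc).mpr (hvr m b hrel).1)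


lemma projSeq_congr {F F' : Frame Loc Chan D} {chan : E → Chan} {msg : E → D}
    {B B' : EvStruct E} {ℓ ℓ' : Loc}
    (h1 : evProj F chan B ℓ = evProj F' chan B' ℓ')
    (h2 : ∀ a b, a ∈ evProj F chan B ℓ → b ∈ evProj F chan B ℓ →
      (B.rel a b ↔ B'.rel a b)) :
    projSeq F chan msg B ℓ = projSeq F' chan msg B' ℓ' := by
  have hmem : ∀ x, x ∈ evProj F chan B ℓ ↔ x ∈ evProj F' chan B' ℓ' :=
    fun x => Set.ext_iff.mp h1 x
  funext n
  have key : ∀ (P Q : E → Prop), P = Q →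
      (if h : ∃ e, P e then some (chan h.choose, msg h.choose) else none) =
      (if h : ∃ e, Q e then some (chan h.choose, msg h.choose) else none) := by
    rintro P Q rfl; rfl
  have hP : (fun e => e ∈ evProj F chan B ℓ ∧
        Set.ncard {e' | e' ∈ evProj F chan B ℓ ∧ B.rel e' e ∧ e' ≠ e} = n) =
      (fun e => e ∈ evProj F' chan B' ℓ' ∧
        Set.ncard {e' | e' ∈ evProj F' chan B' ℓ' ∧ B'.rel e' e ∧ e' ≠ e} = n) := by
    funext e
    apply propext
    have hsets : ∀ he : e ∈ evProj F chan B ℓ,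
        {e' | e' ∈ evProj F chan B ℓ ∧ B.rel e' e ∧ e' ≠ e} =
        {e' | e' ∈ evProj F' chan B' ℓ' ∧ B'.rel e' e ∧ e' ≠ e} := by
      intro he
      ext e'
      simp only [Set.mem_setOf_eq]
      constructor
      · rintro ⟨h3, h4, h5⟩
        exact ⟨(hmem e').mp h3, (h2 e' e h3 he).mp h4, h5⟩
      · rintro ⟨h3, h4, h5⟩
        have h3' := (hmem e').mpr h3
        exact ⟨h3', (h2 e' e h3' he).mpr h4, h5⟩
    constructor
    · rintro ⟨he, hn⟩
      exact ⟨(hmem e).mp he, by rw [← hsets he]; exact hn⟩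
    · rintro ⟨he, hn⟩
      have he' := (hmem e).mpr he
      exact ⟨he', by rw [hsets he']; exact hn⟩
  exact key _ _ hP

lemma la_of_evProj (hAl : IsExec Fl chan msg Al) {ℓ : Loc} (hℓ : ℓ ∈ L0) {e : E}
    (he : e ∈ evProj Fl chan Al ℓ) : laP Fl L0 chan Al e := by
  refine ⟨he.1, mem_touch_iff.mpr ⟨hAl.2.1 e he.1, ?_⟩⟩
  rcases he.2 with h | h
  · exact Or.inl (by rw [h]; exact hℓ)
  · exact Or.inr (by rw [h]; exact hℓ)

lemma ra_of_evProj (hsh : Shared Fl Fr L0) (hAr : IsExec Fr chan msg Ar)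
    {ℓ : Loc} (hℓ : ℓ ∉ L0) {e : E}
    (he : e ∈ evProj Fr chan Ar ℓ) : raP Fl L0 chan Ar e := by
  refine ⟨he.1, fun hc => ?_⟩
  have h'' : chan e ∈ LEFT0 Fr L0 := LEFT0_eq_of_shared hsh ▸ hc
  rcases he.2 with h | h
  · exact hℓ (h ▸ h''.2.1)
  · exact hℓ (h ▸ h''.2.2)

lemma glue_evProj_mem0 (hsh : Shared Fl Fr L0)
    (hcut : evRestrict chan Al (lcut0 Fl L0) = evRestrict chan Ar (lcut0 Fl L0))
    (hAl : IsExec Fl chan msg Al) (hAr : IsExec Fr chan msg Ar)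
    {ℓ : Loc} (hℓ : ℓ ∈ L0) :
    evProj Fr chan (glueSys Fl L0 chan Al Ar) ℓ = evProj Fl chan Al ℓ := by
  ext e
  simp only [evProj, Set.mem_setOf_eq]
  constructor
  · rintro ⟨he, hend⟩
    have hla : laP Fl L0 chan Al e := by
      rcases he with h | h
      · exact h
      · have hch : chan e ∈ Fr.CH := hAr.2.1 e h.1
        have htch : chan e ∈ LEFT0 Fr L0 ∪ lcut0 Fr L0 := by
          refine mem_touch_iff.mpr ⟨hch, ?_⟩
          rcases hend with h' | h'
          · exact Or.inl (by rw [h']; exact hℓ)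
          · exact Or.inr (by rw [h']; exact hℓ)
        rw [← LEFT0_eq_of_shared hsh, ← lcut0_eq_of_shared hsh] at htch
        have hcutc : chan e ∈ lcut0 Fl L0 := by
          rcases htch with h' | h'
          · exact absurd h' h.2
          · exact h'
        exact la_of_cut hcut h.1 hcutc
    have hchl : chan e ∈ Fl.CH := (mem_touch_iff.mp hla.2).1
    have hchr : chan e ∈ Fr.CH := shared_CH_of_touch hsh hla.2
    refine ⟨hla.1, ?_⟩
    rcases hend with h' | h'
    · exact Or.inl ((shared_sender hsh hℓ (chan e)).mpr ⟨hchr, h'⟩).2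
    · exact Or.inr ((shared_recipt hsh hℓ (chan e)).mpr ⟨hchr, h'⟩).2
  · rintro ⟨he, hend⟩
    have hchl : chan e ∈ Fl.CH := hAl.2.1 e he
    have hla : laP Fl L0 chan Al e := by
      refine ⟨he, mem_touch_iff.mpr ⟨hchl, ?_⟩⟩
      rcases hend with h' | h'
      · exact Or.inl (by rw [h']; exact hℓ)
      · exact Or.inr (by rw [h']; exact hℓ)
    refine ⟨Or.inl hla, ?_⟩
    rcases hend with h' | h'
    · exact Or.inl ((shared_sender hsh hℓ (chan e)).mp ⟨hchl, h'⟩).2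
    · exact Or.inr ((shared_recipt hsh hℓ (chan e)).mp ⟨hchl, h'⟩).2

lemma glue_evProj_out (hsh : Shared Fl Fr L0)
    (hcut : evRestrict chan Al (lcut0 Fl L0) = evRestrict chan Ar (lcut0 Fl L0))
    (hAr : IsExec Fr chan msg Ar) {ℓ : Loc} (hℓ : ℓ ∉ L0) :
    evProj Fr chan (glueSys Fl L0 chan Al Ar) ℓ = evProj Fr chan Ar ℓ := by
  ext e
  simp only [evProj, Set.mem_setOf_eq]
  constructor
  · rintro ⟨he, hend⟩
    refine ⟨?_, hend⟩
    rcases he with h | h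
    · have hcutc : chan e ∈ lcut0 Fl L0 := by
        rcases h.2 with h' | h'
        · exfalso
          have h'' : chan e ∈ LEFT0 Fr L0 := LEFT0_eq_of_shared hsh ▸ h'
          rcases hend with he' | he'
          · exact hℓ (he' ▸ h''.2.1)
          · exact hℓ (he' ▸ h''.2.2)
        · exact h'
      exact (cut_mem hcut hcutc).mp h.1
    · exact h.1
  · rintro ⟨he, hend⟩
    refine ⟨?_, hend⟩
    by_cases hc : chan e ∈ LEFT0 Fl L0
    · exfalso
      have h'' : chan e ∈ LEFT0 Fr L0 := LEFT0_eq_of_shared hsh ▸ hc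
      rcases hend with he' | he'
      · exact hℓ (he' ▸ h''.2.1)
      · exact hℓ (he' ▸ h''.2.2)
    · exact Or.inr ⟨he, hc⟩

lemma glue_isExec (hsh : Shared Fl Fr L0)
    (hcut : evRestrict chan Al (lcut0 Fl L0) = evRestrict chan Ar (lcut0 Fl L0))
    (hAl : IsExec Fl chan msg Al) (hAr : IsExec Fr chan msg Ar) :
    IsExec Fr chan msg (glueSys Fl L0 chan Al Ar) := by
  refine ⟨glue_sysEv hcut hAl hAr, ?_, ?_⟩
  · rintro e (he | he)
    · exact shared_CH_of_touch hsh he.2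
    · exact hAr.2.1 e he.1
  · intro ℓ hℓ
    by_cases hmem : ℓ ∈ L0
    · have hproj := glue_evProj_mem0 (Ar := Ar) hsh hcut hAl hAr hmem
      have hrel : ∀ a b, a ∈ evProj Fl chan Al ℓ → b ∈ evProj Fl chan Al ℓ →
          ((glueSys Fl L0 chan Al Ar).rel a b ↔ Al.rel a b) := fun a b ha hb =>
        ⟨fun h => glue_lemL hcut hAl h (la_of_evProj hAl hmem ha) (la_of_evProj hAl hmem hb),
         fun h => Or.inl ⟨h, la_of_evProj hAl hmem ha, la_of_evProj hAl hmem hb⟩⟩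
      have hℓl : ℓ ∈ Fl.LO := hsh.1 hmem
      constructor
      · intro a ha b hb
        have ha' : a ∈ evProj Fl chan Al ℓ := hproj ▸ ha
        have hb' : b ∈ evProj Fl chan Al ℓ := hproj ▸ hb
        rcases (hAl.2.2 ℓ hℓl).1 a ha' b hb' with h | h
        · exact Or.inl ((hrel a b ha' hb').mpr h)
        · exact Or.inr ((hrel b a hb' ha').mpr h)
      · have hseq : projSeq Fr chan msg (glueSys Fl L0 chan Al Ar) ℓ =
            projSeq Fl chan msg Al ℓ :=
          projSeq_congr hproj (fun a b ha hb =>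
            hrel a b (hproj ▸ ha) (hproj ▸ hb))
        rw [hseq, ← (hsh.2.2 ℓ hmem).2.2]
        exact (hAl.2.2 ℓ hℓl).2
    · have hproj := glue_evProj_out (Al := Al) hsh hcut hAr hmem
      have hrel : ∀ a b, a ∈ evProj Fr chan Ar ℓ → b ∈ evProj Fr chan Ar ℓ →
          ((glueSys Fl L0 chan Al Ar).rel a b ↔ Ar.rel a b) := fun a b ha hb =>
        ⟨fun h => glue_lemR hcut hAr h (ra_of_evProj hsh hAr hmem ha)
            (ra_of_evProj hsh hAr hmem hb),
         fun h => Or.inr (Or.inl ⟨h, ra_of_evProj hsh hAr hmem ha,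
            ra_of_evProj hsh hAr hmem hb⟩)⟩
      constructor
      · intro a ha b hb
        have ha' : a ∈ evProj Fr chan Ar ℓ := hproj ▸ ha
        have hb' : b ∈ evProj Fr chan Ar ℓ := hproj ▸ hb
        rcases (hAr.2.2 ℓ hℓ).1 a ha' b hb' with h | h
        · exact Or.inl ((hrel a b ha' hb').mpr h)
        · exact Or.inr ((hrel b a hb' ha').mpr h)
      · have hseq : projSeq Fr chan msg (glueSys Fl L0 chan Al Ar) ℓ =
            projSeq Fr chan msg Ar ℓ :=
          projSeq_congr hproj (fun a b ha hb =>
            hrel a b (hproj ▸ ha) (hproj ▸ hb))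
        rw [hseq]
        exact (hAr.2.2 ℓ hℓ).2

lemma glue_restrict_left
    (hcut : evRestrict chan Al (lcut0 Fl L0) = evRestrict chan Ar (lcut0 Fl L0))
    (hAl : IsExec Fl chan msg Al) (hAr : IsExec Fr chan msg Ar)
    {C : Set Chan} (hC : C ⊆ LEFT0 Fl L0 ∪ lcut0 Fl L0) :
    evRestrict chan (glueSys Fl L0 chan Al Ar) C = evRestrict chan Al C := by
  have laget : ∀ e, (laP Fl L0 chan Al e ∨ raP Fl L0 chan Ar e) → chan e ∈ C →
      laP Fl L0 chan Al e := by
    rintro e (h | h) hc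
    · exact h
    · have hcutc : chan e ∈ lcut0 Fl L0 := by
        rcases hC hc with h' | h'
        · exact absurd h' h.2
        · exact h'
      exact la_of_cut hcut h.1 hcutc
  apply EvStruct.ext'
  · ext e
    simp only [evRestrict, Set.mem_setOf_eq]
    constructor
    · rintro ⟨he, hc⟩
      exact ⟨(laget e he hc).1, hc⟩
    · rintro ⟨he, hc⟩
      exact ⟨Or.inl ⟨he, hC hc⟩, hc⟩
  · funext a b
    apply propext
    constructor
    · rintro ⟨hr, hca, hcb⟩
      have hmem := (glue_sysEv hcut hAl hAr).1 a b hr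
      exact ⟨glue_lemL hcut hAl hr (laget a hmem.1 hca) (laget b hmem.2 hcb), hca, hcb⟩
    · rintro ⟨hr, hca, hcb⟩
      exact ⟨Or.inl ⟨hr, ⟨(hAl.1.1 a b hr).1, hC hca⟩, ⟨(hAl.1.1 a b hr).2, hC hcb⟩⟩,
        hca, hcb⟩

lemma glue_restrict_right
    (hcut : evRestrict chan Al (lcut0 Fl L0) = evRestrict chan Ar (lcut0 Fl L0))
    (hAl : IsExec Fl chan msg Al) (hAr : IsExec Fr chan msg Ar)
    {C : Set Chan} (hC : ∀ c ∈ C, c ∉ LEFT0 Fl L0 ∪ lcut0 Fl L0) :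
    evRestrict chan (glueSys Fl L0 chan Al Ar) C = evRestrict chan Ar C := by
  have raget : ∀ e, (laP Fl L0 chan Al e ∨ raP Fl L0 chan Ar e) → chan e ∈ C →
      raP Fl L0 chan Ar e := by
    rintro e (h | h) hc
    · exact absurd h.2 (hC _ hc)
    · exact h
  apply EvStruct.ext'
  · ext e
    simp only [evRestrict, Set.mem_setOf_eq]
    constructor
    · rintro ⟨he, hc⟩
      exact ⟨(raget e he hc).1, hc⟩
    · rintro ⟨he, hc⟩
      exact ⟨Or.inr ⟨he, fun hl => hC _ hc (Or.inl hl)⟩, hc⟩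
  · funext a b
    apply propext
    constructor
    · rintro ⟨hr, hca, hcb⟩
      have hmem := (glue_sysEv hcut hAl hAr).1 a b hr
      exact ⟨glue_lemR hcut hAr hr (raget a hmem.1 hca) (raget b hmem.2 hcb), hca, hcb⟩
    · rintro ⟨hr, hca, hcb⟩
      exact ⟨Or.inr (Or.inl ⟨hr, ⟨(hAr.1.1 a b hr).1, fun hl => hC _ hca (Or.inl hl)⟩,
        ⟨(hAr.1.1 a b hr).2, fun hl => hC _ hcb (Or.inl hl)⟩⟩), hca, hcb⟩

end Glue



/-- if `L0` is shared between `F1` and `F2`, every `lcut0`-run of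
`F2` is an `lcut0`-run of `F1`, `lsrc ⊆ LEFT0`, `lobs ⊆ RIGHT2`, and `B_o` is
an `lobs`-run of `F2`, then
`J²_{lobs→lsrc}(B_o) = ⋃_{B_c ∈ J²_{lobs→lcut0}(B_o)} J¹_{lcut0→lsrc}(B_c)`. -/
theorem cut_two_frames (F1 F2 : Frame Loc Chan D) (chan : E → Chan) (msg : E → D)
    (L0 : Set Loc) (hsh : Shared F1 F2 L0)
    (hcutruns : lruns F2 chan msg (lcut0 F1 L0) ⊆ lruns F1 chan msg (lcut0 F1 L0))
    (lsrc lobs : Set Chan)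
    (hsrc : lsrc ⊆ LEFT0 F1 L0) (hobs : lobs ⊆ RIGHTchans F2 L0)
    (Bo : EvStruct E) (hBo : Bo ∈ lruns F2 chan msg lobs) :
    cmpt F2 chan msg lobs lsrc Bo =
      ⋃ Bc ∈ cmpt F2 chan msg lobs (lcut0 F1 L0) Bo,
        cmpt F1 chan msg (lcut0 F1 L0) lsrc Bc := by
  have hK : lcut0 F1 L0 = lcut0 F2 L0 := lcut0_eq_of_shared hsh
  have hL : LEFT0 F1 L0 = LEFT0 F2 L0 := LEFT0_eq_of_shared hsh
  ext B'
  simp only [Set.mem_iUnion]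
  constructor
  · rintro ⟨A2, hA2, hobs2, hsrc2⟩
    have hBc : evRestrict chan A2 (lcut0 F1 L0) ∈ lruns F2 chan msg (lcut0 F1 L0) :=
      ⟨A2, hA2, rfl⟩
    obtain ⟨A1, hA1, hA1cut⟩ := hcutruns hBc
    have hcuteq : evRestrict chan A2 (lcut0 F2 L0) = evRestrict chan A1 (lcut0 F2 L0) := by
      rw [← hK]
      exact hA1cut.symm
    have hGexec : IsExec F1 chan msg (glueSys F2 L0 chan A2 A1) :=
      glue_isExec (shared_symm hsh) hcuteq hA2 hA1
    refine ⟨evRestrict chan A2 (lcut0 F1 L0), ⟨A2, hA2, hobs2, rfl⟩,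
      glueSys F2 L0 chan A2 A1, hGexec, ?_, ?_⟩
    · exact glue_restrict_left hcuteq hA2 hA1 (fun c hc => Or.inr (hK ▸ hc))
    · rw [← hsrc2]
      exact glue_restrict_left hcuteq hA2 hA1 (fun c hc => Or.inl (hL ▸ hsrc hc))
  · rintro ⟨Bc, ⟨A2, hA2, hobs2, hcut2⟩, A1, hA1, hcut1, hsrc1⟩
    have hcuteq : evRestrict chan A1 (lcut0 F1 L0) = evRestrict chan A2 (lcut0 F1 L0) :=
      hcut1.trans hcut2.symm
    have hGexec : IsExec F2 chan msg (glueSys F1 L0 chan A1 A2) :=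
      glue_isExec hsh hcuteq hA1 hA2
    have hCobs : ∀ c ∈ lobs, c ∉ LEFT0 F1 L0 ∪ lcut0 F1 L0 := by
      intro c hc h
      obtain ⟨hch, hend⟩ := mem_touch_iff.mp h
      rcases hend with hs | hr
      · have h2 := (shared_sender hsh hs c).mp ⟨hch, rfl⟩
        exact (hobs hc).2.1 (by rw [h2.2]; exact hs)
      · have h2 := (shared_recipt hsh hr c).mp ⟨hch, rfl⟩
        exact (hobs hc).2.2 (by rw [h2.2]; exact hr)
    refine ⟨glueSys F1 L0 chan A1 A2, hGexec, ?_, ?_⟩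
    · rw [← hobs2]
      exact glue_restrict_right hcuteq hA1 hA2 hCobs
    · rw [← hsrc1]
      exact glue_restrict_left hcuteq hA1 hA2 (fun c hc => Or.inl (hsrc hc))
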